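/- The key inductive step: for positive reals b₁ ≥ b₁' and b₂,...,bₙ > 0, the inequality Ψ(b₁, b₂,...,bₙ; D) ≤ Ψ(b₁', b₂,...,bₙ; D) follows from Hölder's inequality: for a nonnegative measurable function h and r = b₁/b₁' ≥ 1, (∫ h dμ)^{b₁} ≤ (∫ h^r dμ)^{b₁'} when 0 ≤ h ≤ 1. -/

import Mathlib

open MeasureTheory ProbabilityTheory Filter Finset
open scoped ENNReal

/-- The recursively defined path-probability function `Ψ` for spherically
symmetric trees, extended to positive real generation sizes:
`Ψ(b; D) = μ(D)^b` and
`Ψ(b₁,…,bₙ; D) = (∫ Ψ(b₂/b₁,…,bₙ/b₁; D/x₁) dμ(x₁))^{b₁}`. -/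
noncomputable def Psi (μ : Measure ℝ) : (n : ℕ) → (Fin (n + 1) → ℝ) → Set (Fin (n + 1) → ℝ) → ℝ
  | 0, b, D => (μ {x | (fun _ : Fin 1 => x) ∈ D}).toReal ^ (b 0)
  | n + 1, b, D =>
      (∫ x, Psi μ n (fun i => b i.succ / b 0) {y | Fin.cons x y ∈ D} ∂μ) ^ (b 0)

lemma psi_nonneg (μ : Measure ℝ) :
    ∀ (n : ℕ) (b : Fin (n + 1) → ℝ) (D : Set (Fin (n + 1) → ℝ)), 0 ≤ Psi μ n b D
  | 0, b, D => Real.rpow_nonneg ENNReal.toReal_nonneg _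
  | n + 1, b, D =>
      Real.rpow_nonneg (integral_nonneg fun x => psi_nonneg μ n _ _) _

lemma measurable_consMap (n : ℕ) :
    Measurable fun p : ℝ × (Fin (n + 1) → ℝ) => (Fin.cons p.1 p.2 : Fin (n + 2) → ℝ) := by
  refine measurable_pi_lambda _ fun i => ?_
  induction i using Fin.cases with
  | zero => simpa using measurable_fst
  | succ j =>
    simp only [Fin.cons_succ]
    fun_prop

lemma measurable_cons_left (n : ℕ) (x : ℝ) :
    Measurable fun y : Fin (n + 1) → ℝ => (Fin.cons x y : Fin (n + 2) → ℝ) := by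
  refine measurable_pi_lambda _ fun i => ?_
  induction i using Fin.cases with
  | zero => simpa using measurable_const
  | succ j => simpa using measurable_pi_apply j

lemma psi_le_one (μ : Measure ℝ) [IsProbabilityMeasure μ] :
    ∀ (n : ℕ) (b : Fin (n + 1) → ℝ), (∀ i, 0 ≤ b i) →
      ∀ (D : Set (Fin (n + 1) → ℝ)), MeasurableSet D → Psi μ n b D ≤ 1 := by
  intro n
  induction n with
  | zero =>
      intro b hb D hD
      refine Real.rpow_le_one ENNReal.toReal_nonneg ?_ (hb 0)
      calc (μ _).toReal ≤ (1 : ℝ≥0∞).toReal :=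
            ENNReal.toReal_mono (by simp) prob_le_one
        _ = 1 := by simp
  | succ n ih =>
      intro b hb D hD
      refine Real.rpow_le_one (integral_nonneg fun x => psi_nonneg μ n _ _) ?_ (hb 0)
      have : (∫ x, Psi μ n (fun i => b i.succ / b 0) {y | Fin.cons x y ∈ D} ∂μ)
          ≤ ∫ _x, (1 : ℝ) ∂μ := by
        refine integral_mono_of_nonneg (ae_of_all _ fun x => psi_nonneg μ n _ _)
          (integrable_const 1) (ae_of_all _ fun x => ?_)
        exact ih _ (fun i => div_nonneg (hb i.succ) (hb 0)) _
          (measurable_cons_left n x hD)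
      simpa using this

lemma psi_section_measurable (μ : Measure ℝ) [IsProbabilityMeasure μ] :
    ∀ (n : ℕ) (b : Fin (n + 1) → ℝ), (∀ i, 0 ≤ b i) →
      ∀ {α : Type} [MeasurableSpace α]
      (D : Set (α × (Fin (n + 1) → ℝ))), MeasurableSet D →
      Measurable fun a => Psi μ n b {y | (a, y) ∈ D} := by
  intro n
  induction n with
  | zero =>
      intro b hb α _ D hD
      set f : α × ℝ → α × (Fin 1 → ℝ) := fun p => (p.1, fun _ : Fin 1 => p.2) with hf
      have hm : Measurable f :=
        measurable_fst.prodMk (measurable_pi_lambda _ fun _ => measurable_snd)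
      have h1 : Measurable fun a => μ (Prod.mk a ⁻¹' (f ⁻¹' D)) :=
        measurable_measure_prodMk_left (hm hD)
      exact (Real.continuous_rpow_const (hb 0)).measurable.comp h1.ennreal_toReal
  | succ n ih =>
      intro b hb α _ D hD
      set f : (α × ℝ) × (Fin (n + 1) → ℝ) → α × (Fin (n + 2) → ℝ) :=
        fun p => (p.1.1, (Fin.cons p.1.2 p.2 : Fin (n + 2) → ℝ)) with hfdef
      have hm : Measurable f :=
        (measurable_fst.comp measurable_fst).prodMk
          ((measurable_consMap n).comp ((measurable_snd.comp measurable_fst).prodMk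
            measurable_snd))
      have hg : Measurable fun q : α × ℝ =>
          Psi μ n (fun i => b i.succ / b 0) {y | (q, y) ∈ f ⁻¹' D} :=
        ih _ (fun i => div_nonneg (hb i.succ) (hb 0)) _ (hm hD)
      have hint : Measurable fun a : α =>
          ∫ x, Psi μ n (fun i => b i.succ / b 0) {y | ((a, x), y) ∈ f ⁻¹' D} ∂μ :=
        hg.stronglyMeasurable.integral_prod_right'.measurable
      exact (Real.continuous_rpow_const (hb 0)).measurable.comp hint

lemma psi_smul (μ : Measure ℝ) :
    ∀ (n : ℕ) (b : Fin (n + 1) → ℝ) (c : ℝ), c ≠ 0 →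
      ∀ (D : Set (Fin (n + 1) → ℝ)),
      Psi μ n (fun i => c * b i) D = Psi μ n b D ^ c := by
  intro n
  induction n with
  | zero =>
      intro b c hc D
      show (μ _).toReal ^ (c * b 0) = ((μ _).toReal ^ b 0) ^ c
      rw [mul_comm, Real.rpow_mul ENNReal.toReal_nonneg]
  | succ n ih =>
      intro b c hc D
      show (∫ x, Psi μ n (fun i => c * b i.succ / (c * b 0)) {y | Fin.cons x y ∈ D} ∂μ)
            ^ (c * b 0)
          = ((∫ x, Psi μ n (fun i => b i.succ / b 0) {y | Fin.cons x y ∈ D} ∂μ) ^ b 0) ^ c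
      simp only [mul_div_mul_left _ _ hc]
      rw [mul_comm, Real.rpow_mul (integral_nonneg fun x => psi_nonneg μ n _ _)]

lemma jensen_rpow (μ : Measure ℝ) [IsProbabilityMeasure μ] (r : ℝ) (hr : 1 ≤ r)
    (h : ℝ → ℝ) (hm : Measurable h) (hb : ∀ x, 0 ≤ h x ∧ h x ≤ 1) :
    (∫ x, h x ∂μ) ^ r ≤ ∫ x, h x ^ r ∂μ := by
  have h0r : (0 : ℝ) ≤ r := le_trans zero_le_one hr
  have hfi : Integrable h μ := by
    refine (integrable_const (1 : ℝ)).mono' hm.aestronglyMeasurable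
      (ae_of_all _ fun x => ?_)
    rw [Real.norm_eq_abs, abs_of_nonneg (hb x).1]
    exact (hb x).2
  have hgi : Integrable (fun x => h x ^ r) μ := by
    refine (integrable_const (1 : ℝ)).mono'
      ((Real.continuous_rpow_const h0r).measurable.comp hm).aestronglyMeasurable
      (ae_of_all _ fun x => ?_)
    rw [Real.norm_eq_abs, abs_of_nonneg (Real.rpow_nonneg (hb x).1 r)]
    exact Real.rpow_le_one (hb x).1 (hb x).2 h0r
  exact (convexOn_rpow hr).map_integral_le
    ((Real.continuous_rpow_const h0r).continuousOn) isClosed_Ici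
    (ae_of_all _ fun x => (hb x).1) hfi hgi

/-- the key inductive step.  For `0 < b₁' ≤ b₁` and `r = b₁/b₁' ≥ 1`,
Hölder's inequality gives `(∫ h dμ)^{b₁} ≤ (∫ h^r dμ)^{b₁'}` for `0 ≤ h ≤ 1`, and
consequently `Ψ(b₁, b₂,…,bₙ; D) ≤ Ψ(b₁', b₂,…,bₙ; D)`. -/
theorem psi_antitone_first_argument_via_holder (μ : Measure ℝ) [IsProbabilityMeasure μ]
    (n : ℕ) (D : Set (Fin (n + 1) → ℝ)) (hD : MeasurableSet D)
    (b : Fin (n + 1) → ℝ) (hb : ∀ i, 0 < b i)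
    (b₁' : ℝ) (hb₁' : 0 < b₁') (hle : b₁' ≤ b 0) :
    (∀ h : ℝ → ℝ, Measurable h → (∀ x, 0 ≤ h x ∧ h x ≤ 1) →
        (∫ x, h x ∂μ) ^ (b 0) ≤ (∫ x, h x ^ (b 0 / b₁') ∂μ) ^ b₁') ∧
      Psi μ n b D ≤ Psi μ n (Function.update b 0 b₁') D := by
  have hb₁'ne : b₁' ≠ 0 := ne_of_gt hb₁'
  have hb0 : 0 < b 0 := hb 0
  have hr : 1 ≤ b 0 / b₁' := (one_le_div hb₁').2 hle
  have key : ∀ h : ℝ → ℝ, Measurable h → (∀ x, 0 ≤ h x ∧ h x ≤ 1) →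
      (∫ x, h x ∂μ) ^ (b 0) ≤ (∫ x, h x ^ (b 0 / b₁') ∂μ) ^ b₁' := by
    intro h hm hbd
    have h1 : (∫ x, h x ∂μ) ^ (b 0 / b₁') ≤ ∫ x, h x ^ (b 0 / b₁') ∂μ :=
      jensen_rpow μ _ hr h hm hbd
    have hInn : 0 ≤ ∫ x, h x ∂μ := integral_nonneg fun x => (hbd x).1
    calc (∫ x, h x ∂μ) ^ (b 0) = ((∫ x, h x ∂μ) ^ (b 0 / b₁')) ^ b₁' := by
          rw [← Real.rpow_mul hInn, div_mul_cancel₀ _ hb₁'ne]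
      _ ≤ (∫ x, h x ^ (b 0 / b₁') ∂μ) ^ b₁' :=
          Real.rpow_le_rpow (Real.rpow_nonneg hInn _) h1 (le_of_lt hb₁')
  refine ⟨key, ?_⟩
  cases n with
  | zero =>
      show (μ _).toReal ^ (b 0) ≤ (μ _).toReal ^ (Function.update b 0 b₁' 0)
      rw [Function.update_self]
      rcases eq_or_ne (μ {x | (fun _ : Fin 1 => x) ∈ D}).toReal 0 with h0 | h0
      · rw [h0, Real.zero_rpow (ne_of_gt hb0), Real.zero_rpow hb₁'ne]
      · have hpos : 0 < (μ {x | (fun _ : Fin 1 => x) ∈ D}).toReal :=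
          lt_of_le_of_ne ENNReal.toReal_nonneg (Ne.symm h0)
        have hle1 : (μ {x | (fun _ : Fin 1 => x) ∈ D}).toReal ≤ 1 := by
          calc (μ _).toReal ≤ (1 : ℝ≥0∞).toReal :=
                ENNReal.toReal_mono (by simp) prob_le_one
            _ = 1 := by simp
        exact Real.rpow_le_rpow_of_exponent_ge hpos hle1 hle
  | succ m =>
      set h : ℝ → ℝ := fun x =>
        Psi μ m (fun i => b i.succ / b 0) {y | Fin.cons x y ∈ D} with hh
      have hm : Measurable fun p : ℝ × (Fin (m + 1) → ℝ) =>
          (Fin.cons p.1 p.2 : Fin (m + 2) → ℝ) := measurable_consMap m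
      have hmeas : Measurable h := by
        have := psi_section_measurable μ m (fun i => b i.succ / b 0)
          (fun i => le_of_lt (div_pos (hb i.succ) hb0))
          ((fun p : ℝ × (Fin (m + 1) → ℝ) => (Fin.cons p.1 p.2 : Fin (m + 2) → ℝ)) ⁻¹' D)
          (hm hD)
        exact this
      have hbd : ∀ x, 0 ≤ h x ∧ h x ≤ 1 := fun x =>
        ⟨psi_nonneg μ m _ _,
          psi_le_one μ m _ (fun i => le_of_lt (div_pos (hb i.succ) hb0)) _
            (measurable_cons_left m x hD)⟩
      have step := key h hmeas hbd
      have harg : (fun i : Fin (m + 1) => b i.succ / b₁')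
          = fun i => (b 0 / b₁') * (b i.succ / b 0) := by
        funext i
        field_simp
      have hpow : ∀ x, h x ^ (b 0 / b₁')
          = Psi μ m (fun i => b i.succ / b₁') {y | Fin.cons x y ∈ D} := by
        intro x
        rw [harg, psi_smul μ m _ _ (div_ne_zero (ne_of_gt hb0) hb₁'ne)]
      show (∫ x, Psi μ m (fun i => b i.succ / b 0) {y | Fin.cons x y ∈ D} ∂μ) ^ (b 0)
          ≤ (∫ x, Psi μ m (fun i => Function.update b 0 b₁' i.succ
              / Function.update b 0 b₁' 0) {y | Fin.cons x y ∈ D} ∂μ)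
            ^ (Function.update b 0 b₁' 0)
      have hupd : (fun i : Fin (m + 1) => Function.update b 0 b₁' i.succ
          / Function.update b 0 b₁' 0) = fun i => b i.succ / b₁' := by
        funext i
        rw [Function.update_self, Function.update_of_ne (Fin.succ_ne_zero i)]
      rw [hupd, Function.update_self]
      calc (∫ x, h x ∂μ) ^ (b 0) ≤ (∫ x, h x ^ (b 0 / b₁') ∂μ) ^ b₁' := step
        _ = (∫ x, Psi μ m (fun i => b i.succ / b₁') {y | Fin.cons x y ∈ D} ∂μ) ^ b₁' := by
            congr 1
            exact integral_congr_ae (ae_of_all _ fun x => hpow x)
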